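/- Let A : ℝ → ℝ be Lipschitz with constant L, let b : ℝ → ℝ be locally integrable, let I = (x₀ − r, x₀ + r), let α be a median of b on I, let 1 < p < ∞, and let f := |I|^{−1/p}(χ_{I₁} − χ_{I₂} − a χ_I) with I₁ := {x ∈ I : b(x) > α}, I₂ := {x ∈ I : b(x) < α}, a := (|I₁| − |I₂|)/|I|. Then there is a constant c > 0 depending only on L such that for every integer k ≥ 2 and every y ∈ (x₀ + 2^k r, x₀ + 2^{k+1} r), |∫_I K(y,z)(b(z) − α) f(z) dz| ≥ c |I|^{−1/p} (2^{k+2} r)^{−1} ∫_I |b(z) − α| dz. -/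

import Mathlib

open MeasureTheory Filter Set

/-- The Cauchy kernel `K(x,y) = 1/(y - x + i(A(y) - A(x)))` associated to `A`. -/
noncomputable def cauchyKernel (A : ℝ → ℝ) (x y : ℝ) : ℂ :=
  ((y : ℂ) - (x : ℂ) + Complex.I * ((A y : ℂ) - (A x : ℂ)))⁻¹

/-- `α` is a median of `b` on the bounded interval `I`. -/
def IsMedian (b : ℝ → ℝ) (I : Set ℝ) (α : ℝ) : Prop :=
  volume {x | x ∈ I ∧ α < b x} ≤ volume I / 2 ∧
  volume {x | x ∈ I ∧ b x < α} ≤ volume I / 2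

/-
Write `δ = (2r)^{-1/p}`. On `I` the product `(b - α) f` equals `δ (|b - α| - a (b - α))`, and the
median property gives `|a| ≤ 1/2`, so `(b - α) f ≥ δ |b - α| / 2 ≥ 0`. For `z ∈ I` the point `y`
lies to the right of `z` at distance at most `2^{k+2} r`, and the Lipschitz bound on `A` gives
`-Re K(y,z) = (y - z)/((y - z)² + (A y - A z)²) ≥ ((1 + L²)(y - z))⁻¹ ≥ ((1 + L²) 2^{k+2} r)⁻¹`.
Bounding the norm of the integral from below by minus its real part gives the claim with
`c = (2 (1 + L²))⁻¹`.
-/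

theorem half_abs_le_abs_sub_mul {a : ℝ} (ha : |a| ≤ 1 / 2) (t : ℝ) : |t| / 2 ≤ |t| - a * t := by
  nlinarith [abs_mul a t, le_abs_self (a * t), mul_le_mul_of_nonneg_right ha (abs_nonneg t)]

theorem sub_mul_indicator_sub_indicator {X : Type*} {b : X → ℝ} {I : Set X} {α a : ℝ} {z : X}
    (hz : z ∈ I) :
    (b z - α) * ({x | x ∈ I ∧ α < b x}.indicator (fun _ => (1 : ℝ)) z -
      {x | x ∈ I ∧ b x < α}.indicator (fun _ => (1 : ℝ)) z - a * I.indicator (fun _ => 1) z) =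
      |b z - α| - a * (b z - α) := by
  rcases lt_trichotomy (b z) α with h | h | h
  · simp only [indicator, mem_ofPred_eq, hz, h, h.not_gt, and_true, and_false, ↓reduceIte,
      abs_of_neg (sub_neg.2 h)]
    ring
  · simp [h]
  · simp only [indicator, mem_ofPred_eq, hz, h, h.not_gt, and_true, and_false, ↓reduceIte,
      abs_of_pos (sub_pos.2 h)]
    ring

theorem IsMedian.abs_sub_div_le_half {b : ℝ → ℝ} {I : Set ℝ} {α : ℝ} (h : IsMedian b I α)
    (hI : volume I ≠ ⊤) :
    |((volume {x | x ∈ I ∧ α < b x}).toReal - (volume {x | x ∈ I ∧ b x < α}).toReal) /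
      (volume I).toReal| ≤ 1 / 2 := by
  rcases (ENNReal.toReal_nonneg (a := volume I)).eq_or_lt with h₀ | hpos
  · simp [← h₀]
  have h₁ := ENNReal.toReal_mono (ENNReal.div_ne_top hI two_ne_zero) h.1
  have h₂ := ENNReal.toReal_mono (ENNReal.div_ne_top hI two_ne_zero) h.2
  rw [ENNReal.toReal_div, ENNReal.toReal_ofNat] at h₁ h₂
  rw [abs_div, abs_of_pos hpos, div_le_iff₀ hpos, abs_sub_le_iff]
  constructor <;> linarith [ENNReal.toReal_nonneg (a := volume {x | x ∈ I ∧ b x < α}),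
    ENNReal.toReal_nonneg (a := volume {x | x ∈ I ∧ α < b x})]

theorem mul_integral_le_norm_integral_mul {X : Type*} [MeasurableSpace X] {μ : Measure X}
    {K : X → ℂ} {g : X → ℝ} {m : ℝ} (hg : Integrable g μ)
    (hKg : Integrable (fun x => K x * g x) μ) (hg₀ : ∀ᵐ x ∂μ, 0 ≤ g x)
    (hK : ∀ᵐ x ∂μ, m ≤ -(K x).re) :
    m * ∫ x, g x ∂μ ≤ ‖∫ x, K x * g x ∂μ‖ := by
  calc m * ∫ x, g x ∂μ = ∫ x, m * g x ∂μ := (integral_const_mul m g).symm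
    _ ≤ ∫ x, -(K x * g x).re ∂μ := by
        refine integral_mono_ae (hg.const_mul m) hKg.re.neg ?_
        filter_upwards [hg₀, hK] with x hgx hKx
        rw [Complex.re_mul_ofReal]
        nlinarith
    _ = -(∫ x, K x * g x ∂μ).re := by rw [integral_neg]; exact congrArg _ (integral_re hKg)
    _ ≤ ‖∫ x, K x * g x ∂μ‖ := (neg_le_abs _).trans (Complex.abs_re_le_norm _)

open Complex in
theorem cauchyKernel_re (A : ℝ → ℝ) (x y : ℝ) :
    (cauchyKernel A x y).re = (y - x) / ((y - x) ^ 2 + (A y - A x) ^ 2) := by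
  simp only [cauchyKernel, inv_re, normSq_apply, add_re, add_im, sub_re, sub_im, mul_re, mul_im,
    ofReal_re, ofReal_im, I_re, I_im]
  ring

theorem norm_cauchyKernel_le (A : ℝ → ℝ) {x y : ℝ} (h : x ≠ y) :
    ‖cauchyKernel A x y‖ ≤ |y - x|⁻¹ := by
  rw [cauchyKernel, norm_inv]
  refine inv_anti₀ (abs_pos.2 (sub_ne_zero.2 h.symm)) ?_
  simpa using Complex.abs_re_le_norm ((y : ℂ) - x + Complex.I * ((A y : ℂ) - A x))

theorem inv_le_neg_re_cauchyKernel {A : ℝ → ℝ} {L x y : ℝ}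
    (hA : |A x - A y| ≤ L * |x - y|) (hyx : y < x) :
    ((1 + L ^ 2) * (x - y))⁻¹ ≤ -(cauchyKernel A x y).re := by
  have hxy : 0 < x - y := sub_pos.2 hyx
  have hsq : (A y - A x) ^ 2 ≤ L ^ 2 * (x - y) ^ 2 := by
    rw [abs_of_pos hxy] at hA
    calc (A y - A x) ^ 2 = |A x - A y| ^ 2 := by rw [sq_abs, ← neg_sub, neg_sq]
      _ ≤ (L * (x - y)) ^ 2 := pow_le_pow_left₀ (abs_nonneg _) hA 2
      _ = L ^ 2 * (x - y) ^ 2 := by ring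
  rw [cauchyKernel_re, ← neg_div, neg_sub, inv_eq_one_div,
    div_le_div_iff₀ (by positivity) (by nlinarith [sq_nonneg (A y - A x)])]
  nlinarith

theorem measurable_cauchyKernel {A : ℝ → ℝ} (hA : Measurable A) (x : ℝ) :
    Measurable (cauchyKernel A x) := by
  unfold cauchyKernel
  fun_prop

theorem inv_mul_setIntegral_le_norm_setIntegral_cauchyKernel {A : ℝ → ℝ} {L : ℝ}
    (hA : ∀ x₁ x₂ : ℝ, |A x₁ - A x₂| ≤ L * |x₁ - x₂|) {I : Set ℝ} (hI : MeasurableSet I)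
    {g : ℝ → ℝ} (hg : IntegrableOn g I) (hg₀ : ∀ z ∈ I, 0 ≤ g z) {y d R : ℝ} (hd : 0 < d)
    (hyI : ∀ z ∈ I, y - z ∈ Icc d R) :
    ((1 + L ^ 2) * R)⁻¹ * ∫ z in I, g z ≤ ‖∫ z in I, cauchyKernel A y z * g z‖ := by
  have hAm : Measurable A := (LipschitzWith.of_dist_le' (K := L) fun x₁ x₂ => by
    simpa [Real.dist_eq] using hA x₁ x₂).continuous.measurable
  have hK_bdd : ∀ z ∈ I, ‖cauchyKernel A y z‖ ≤ d⁻¹ := fun z hz => by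
    refine (norm_cauchyKernel_le A (by linarith [(hyI z hz).1])).trans (inv_anti₀ hd ?_)
    rw [abs_sub_comm]; exact (hyI z hz).1.trans (le_abs_self _)
  have hK_re : ∀ z ∈ I, ((1 + L ^ 2) * R)⁻¹ ≤ -(cauchyKernel A y z).re := fun z hz => by
    obtain ⟨hdz, hzR⟩ := hyI z hz
    exact (inv_anti₀ (mul_pos (by positivity) (by linarith)) (by gcongr)).trans
      (inv_le_neg_re_cauchyKernel (hA y z) (by linarith))
  refine mul_integral_le_norm_integral_mul hg ?_ ((ae_restrict_iff' hI).2 (ae_of_all _ hg₀))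
    ((ae_restrict_iff' hI).2 (ae_of_all _ hK_re))
  exact hg.ofReal.bdd_mul (measurable_cauchyKernel hAm y).aestronglyMeasurable
    ((ae_restrict_iff' hI).2 (ae_of_all _ hK_bdd))

theorem sub_mem_Ioc_of_mem_Ioo {x₀ r y z : ℝ} {k : ℕ} (hk : 1 ≤ k) (hr : 0 < r)
    (hz : z ∈ Ioo (x₀ - r) (x₀ + r)) (hy : y ∈ Ioo (x₀ + 2 ^ k * r) (x₀ + 2 ^ (k + 1) * r)) :
    y - z ∈ Ioc r (2 ^ (k + 2) * r) := by
  have h₂ : 2 * r ≤ 2 ^ k * r := by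
    gcongr; exact (pow_le_pow_right₀ one_le_two hk).trans_eq' (pow_one 2)
  have e₁ : (2 : ℝ) ^ (k + 1) * r = 2 * (2 ^ k * r) := by ring
  have e₂ : (2 : ℝ) ^ (k + 2) * r = 4 * (2 ^ k * r) := by ring
  constructor <;> linarith [hz.1, hz.2, hy.1, hy.2]

theorem median_test_function_lower_bound_general
    (A : ℝ → ℝ) (L : ℝ)
    (hA : ∀ x₁ x₂ : ℝ, |A x₁ - A x₂| ≤ L * |x₁ - x₂|) :
    ∃ c : ℝ, 0 < c ∧
      ∀ (b : ℝ → ℝ), MeasureTheory.LocallyIntegrable b volume →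
      ∀ (x₀ r : ℝ), 0 < r →
      ∀ (I : Set ℝ), I = Set.Ioo (x₀ - r) (x₀ + r) →
      ∀ (α : ℝ), IsMedian b I α →
      ∀ (p : ℝ), 1 < p →
      ∀ (I₁ I₂ : Set ℝ) (a : ℝ) (f : ℝ → ℝ),
        I₁ = {x | x ∈ I ∧ α < b x} →
        I₂ = {x | x ∈ I ∧ b x < α} →
        a = ((volume I₁).toReal - (volume I₂).toReal) / (2 * r) →
        f = (fun y => (2 * r) ^ (-1 / p) *
            (Set.indicator I₁ (fun _ => (1 : ℝ)) y - Set.indicator I₂ (fun _ => (1 : ℝ)) y -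
              a * Set.indicator I (fun _ => (1 : ℝ)) y)) →
      ∀ k : ℕ, 2 ≤ k →
      ∀ y ∈ Set.Ioo (x₀ + 2 ^ k * r) (x₀ + 2 ^ (k + 1) * r),
        c * (2 * r) ^ (-1 / p) * (2 ^ (k + 2) * r)⁻¹ * (∫ z in I, |b z - α|) ≤
          ‖∫ z in I, cauchyKernel A y z * (((b z - α) : ℝ) : ℂ) * ((f z : ℝ) : ℂ)‖ := by
  refine ⟨(2 * (1 + L ^ 2))⁻¹, by positivity, ?_⟩
  rintro b hb x₀ r hr I hI α hmed p - I₁ I₂ a f rfl rfl ha hf k hk y hy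
  set δ := (2 * r) ^ (-1 / p)
  have hIm : MeasurableSet I := hI ▸ measurableSet_Ioo
  have hvol : volume I = ENNReal.ofReal (2 * r) := by
    rw [hI, Real.volume_Ioo]; ring_nf
  have ha : |a| ≤ 1 / 2 := by
    simpa [ha, hvol, hr.le] using hmed.abs_sub_div_le_half (hvol ▸ ENNReal.ofReal_ne_top)
  have hg : ∀ z ∈ I, (b z - α) * f z = δ * (|b z - α| - a * (b z - α)) := fun z hz => by
    simp only [hf, ← sub_mul_indicator_sub_indicator hz]; ring
  have hg_ge : ∀ z ∈ I, δ * (|b z - α| / 2) ≤ (b z - α) * f z := fun z hz =>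
    (hg z hz).symm ▸ mul_le_mul_of_nonneg_left (half_abs_le_abs_sub_mul ha _) (by positivity)
  have hbI : IntegrableOn (fun z => b z - α) I :=
    ((hb.integrableOn_isCompact isCompact_Icc).mono_set (hI ▸ Ioo_subset_Icc_self)).sub
      (integrableOn_const (hvol ▸ ENNReal.ofReal_ne_top))
  have hgI : IntegrableOn (fun z => (b z - α) * f z) I :=
    IntegrableOn.congr_fun ((hbI.abs.sub (hbI.const_mul a)).const_mul δ)
      (fun z hz => (hg z hz).symm) hIm
  calc (2 * (1 + L ^ 2))⁻¹ * δ * (2 ^ (k + 2) * r)⁻¹ * ∫ z in I, |b z - α|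
      = ((1 + L ^ 2) * (2 ^ (k + 2) * r))⁻¹ * ∫ z in I, δ * (|b z - α| / 2) := by
        rw [integral_const_mul, integral_div]; field_simp
    _ ≤ ((1 + L ^ 2) * (2 ^ (k + 2) * r))⁻¹ * ∫ z in I, (b z - α) * f z := by
        gcongr ?_ * ?_
        exact setIntegral_mono_on (hbI.abs.div_const 2 |>.const_mul δ) hgI hIm hg_ge
    _ ≤ ‖∫ z in I, cauchyKernel A y z * ((b z - α) * f z : ℝ)‖ :=
        inv_mul_setIntegral_le_norm_setIntegral_cauchyKernel hA hIm hgI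
          (fun z hz => le_trans (by positivity) (hg_ge z hz)) hr
          (fun z hz => Ioc_subset_Icc_self (sub_mem_Ioc_of_mem_Ioo (by omega) hr (hI ▸ hz) hy))
    _ = _ := by simp_rw [Complex.ofReal_mul, mul_assoc]

/-- Lower bound for `|∫_I K(y,z)(b(z) - α) f(z) dz|` for `y ∈ (x₀ + 2^k r, x₀ + 2^{k+1} r)`,
where `f = |I|^{-1/p}(χ_{I₁} - χ_{I₂} - a χ_I)` is the median test function; the constant
`c > 0` depends only on `L`. -/
theorem median_test_function_lower_bound
    (A : ℝ → ℝ) (L : ℝ) (hL : 0 < L)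
    (hA : ∀ x₁ x₂ : ℝ, |A x₁ - A x₂| ≤ L * |x₁ - x₂|) :
    ∃ c : ℝ, 0 < c ∧
      ∀ (b : ℝ → ℝ), MeasureTheory.LocallyIntegrable b volume →
      ∀ (x₀ r : ℝ), 0 < r →
      ∀ (I : Set ℝ), I = Set.Ioo (x₀ - r) (x₀ + r) →
      ∀ (α : ℝ), IsMedian b I α →
      ∀ (p : ℝ), 1 < p →
      ∀ (I₁ I₂ : Set ℝ) (a : ℝ) (f : ℝ → ℝ),
        I₁ = {x | x ∈ I ∧ α < b x} →
        I₂ = {x | x ∈ I ∧ b x < α} →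
        a = ((volume I₁).toReal - (volume I₂).toReal) / (2 * r) →
        f = (fun y => (2 * r) ^ (-1 / p) *
            (Set.indicator I₁ (fun _ => (1 : ℝ)) y - Set.indicator I₂ (fun _ => (1 : ℝ)) y -
              a * Set.indicator I (fun _ => (1 : ℝ)) y)) →
      ∀ k : ℕ, 2 ≤ k →
      ∀ y ∈ Set.Ioo (x₀ + 2 ^ k * r) (x₀ + 2 ^ (k + 1) * r),
        c * (2 * r) ^ (-1 / p) * (2 ^ (k + 2) * r)⁻¹ * (∫ z in I, |b z - α|) ≤
          ‖∫ z in I, cauchyKernel A y z * (((b z - α) : ℝ) : ℂ) * ((f z : ℝ) : ℂ)‖ :=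
  median_test_function_lower_bound_general A L hA
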